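/- Let n ≥ 1, B ≥ 1, α ∈ (0,1), ε > 0, δ ∈ [0,1), ξ = ε + log(1/(1−δ)) and Δ > 0. Let X be a set and let T_0, T_1, …, T_B : X^n → ℝ be functions such that |T_i(x) − T_i(x̃)| ≤ Δ for every i ∈ {0,1,…,B} and all x, x̃ ∈ X^n with d_ham(x, x̃) ≤ 1. Define the randomized algorithm A that, on input x ∈ X^n, draws ζ_0, ζ_1, …, ζ_B i.i.d. from the standard Laplace distribution, sets M_i = T_i(x) + (2Δ/ξ) ζ_i for i = 0,1,…,B, and outputs A(x) = 1{ (B+1)^{-1}(Σ_{i=1}^B 1{M_0 ≤ M_i} + 1) ≤ α } ∈ {0,1}. Then A is (ε,δ)-differentially private: for all x, x̃ ∈ X^n with d_ham(x, x̃) ≤ 1 and every S ⊆ {0,1}, P(A(x) ∈ S) ≤ e^ε P(A(x̃) ∈ S) + δ. -/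

import Mathlib

/-!
Shifting the noise `ζ 0` of the original statistic by `ξ` raises `M 0` by `2Δ`, which dominates
the change of every `T i` between adjacent inputs; so this shift maps the acceptance event for `x`
into the one for `x'` (and the shift by `-ξ` does the same for rejection). A shift by `ξ` changes
the Laplace density by a factor at most `exp ξ`, which gives pure `ξ`-privacy of each outcome.
Finally `exp ξ = exp ε / (1 - δ)`, and for a probability `P ≤ 1` this is traded for `(ε, δ)`.
-/

open MeasureTheory

noncomputable section

/-- Standard Laplace distribution on ℝ. -/
def stdLaplace : Measure ℝ :=
  volume.withDensity (fun x => ENNReal.ofReal ((1 / 2) * Real.exp (-|x|)))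

/-- Output of the differentially private resampling test on input `x`, given
the Laplace noises `ζ`: it returns `true` iff the noised resampling p-value is
at most `α`, where `M i = T i x + (2Δ/ξ) ζ i`. -/
def dpResamplingOutput {XT : Type*} {n B : ℕ}
    (T : Fin (B + 1) → (Fin n → XT) → ℝ) (α Δ ξ : ℝ)
    (x : Fin n → XT) (ζ : Fin (B + 1) → ℝ) : Bool :=
  if ((∑ i : Fin B,
        if T 0 x + 2 * Δ / ξ * ζ 0 ≤ T i.succ x + 2 * Δ / ξ * ζ i.succ
        then (1 : ℝ) else 0) + 1) / ((B : ℝ) + 1) ≤ α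
  then true else false

open ENNReal

def laplaceDensity (x : ℝ) : ℝ≥0∞ := ENNReal.ofReal ((1 / 2) * Real.exp (-|x|))

lemma stdLaplace_eq_withDensity : stdLaplace = volume.withDensity laplaceDensity := rfl

lemma measurable_laplaceDensity : Measurable laplaceDensity :=
  (((measurable_id.abs.neg).exp).const_mul _).ennreal_ofReal

lemma laplaceDensity_sub_le (x s : ℝ) :
    laplaceDensity (x - s) ≤ ENNReal.ofReal (Real.exp |s|) * laplaceDensity x := by
  rw [laplaceDensity, laplaceDensity, ← ENNReal.ofReal_mul (Real.exp_nonneg _)]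
  refine ENNReal.ofReal_le_ofReal ?_
  have : |x| ≤ |x - s| + |s| := by simpa using abs_add_le (x - s) s
  calc 1 / 2 * Real.exp (-|x - s|) ≤ 1 / 2 * Real.exp (|s| + -|x|) := by gcongr; linarith
    _ = Real.exp |s| * (1 / 2 * Real.exp (-|x|)) := by rw [Real.exp_add]; ring

lemma integrable_exp_neg_abs : Integrable fun x : ℝ => Real.exp (-|x|) := by
  have h1 : IntegrableOn (fun x : ℝ => Real.exp (-|x|)) (Set.Iic 0) := by
    refine (integrableOn_exp_Iic 0).congr_fun (fun x hx => ?_) measurableSet_Iic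
    simp [abs_of_nonpos (Set.mem_Iic.mp hx)]
  have h2 : IntegrableOn (fun x : ℝ => Real.exp (-|x|)) (Set.Ioi 0) := by
    refine (exp_neg_integrableOn_Ioi 0 one_pos).congr_fun (fun x hx => ?_) measurableSet_Ioi
    simp [abs_of_pos (Set.mem_Ioi.mp hx)]
  rw [← integrableOn_univ, ← Set.Iic_union_Ioi]
  exact h1.union h2

instance : IsProbabilityMeasure stdLaplace := by
  constructor
  rw [stdLaplace, withDensity_apply _ MeasurableSet.univ, Measure.restrict_univ,
    ← ofReal_integral_eq_lintegral_ofReal (integrable_exp_neg_abs.const_mul _)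
      (Filter.Eventually.of_forall fun x => by positivity),
    integral_const_mul, integral_comp_abs (f := fun x => Real.exp (-x)),
    integral_exp_neg_Ioi_zero]
  norm_num

lemma lintegral_stdLaplace_comp_add_le (s : ℝ) {f : ℝ → ℝ≥0∞} (hf : Measurable f) :
    ∫⁻ x, f (x + s) ∂stdLaplace ≤ ENNReal.ofReal (Real.exp |s|) * ∫⁻ x, f x ∂stdLaplace := by
  rw [stdLaplace_eq_withDensity,
    lintegral_withDensity_eq_lintegral_mul _ measurable_laplaceDensity
      (show Measurable fun x => f (x + s) from hf.comp (measurable_add_const s)),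
    lintegral_withDensity_eq_lintegral_mul _ measurable_laplaceDensity hf,
    ← lintegral_const_mul' _ _ ofReal_ne_top]
  calc ∫⁻ x, laplaceDensity x * f (x + s)
      = ∫⁻ x, laplaceDensity (x - s) * f x := by
        simpa using (lintegral_add_right_eq_self (μ := volume)
          (fun x => laplaceDensity (x - s) * f x) s)
    _ ≤ ∫⁻ x, ENNReal.ofReal (Real.exp |s|) * (laplaceDensity x * f x) := by
        refine lintegral_mono fun x => ?_
        rw [← mul_assoc]
        exact mul_le_mul_left (laplaceDensity_sub_le x s) _

lemma stdLaplace_prod_preimage_add_fst_le {β : Type*} [MeasurableSpace β] (ν : Measure β)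
    [SFinite ν] (s : ℝ) {A : Set (ℝ × β)} (hA : MeasurableSet A) :
    (stdLaplace.prod ν) ((fun p => (p.1 + s, p.2)) ⁻¹' A)
      ≤ ENNReal.ofReal (Real.exp |s|) * (stdLaplace.prod ν) A := by
  have hshift : MeasurableSet ((fun p : ℝ × β => (p.1 + s, p.2)) ⁻¹' A) :=
    ((measurable_fst.add_const s).prodMk measurable_snd) hA
  rw [Measure.prod_apply hshift, Measure.prod_apply hA]
  exact lintegral_stdLaplace_comp_add_le s (measurable_measure_prodMk_left hA)

lemma pi_stdLaplace_preimage_update_add_le {m : ℕ} (i : Fin (m + 1)) (s : ℝ)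
    {A : Set (Fin (m + 1) → ℝ)} (hA : MeasurableSet A) :
    (Measure.pi fun _ => stdLaplace) {ζ | Function.update ζ i (ζ i + s) ∈ A}
      ≤ ENNReal.ofReal (Real.exp |s|) * (Measure.pi fun _ => stdLaplace) A := by
  let e := MeasurableEquiv.piFinSuccAbove (fun _ : Fin (m + 1) => ℝ) i
  have he : MeasurePreserving e (Measure.pi fun _ => stdLaplace)
      (stdLaplace.prod (Measure.pi fun _ => stdLaplace)) :=
    measurePreserving_piFinSuccAbove (fun _ => stdLaplace) i
  have hA' : MeasurableSet (e.symm ⁻¹' A) := e.symm.measurable hA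
  have hupdate : {ζ | Function.update ζ i (ζ i + s) ∈ A}
      = e ⁻¹' ((fun p => (p.1 + s, p.2)) ⁻¹' (e.symm ⁻¹' A)) := by
    ext ζ
    simp [e, Fin.insertNthEquiv]
  have hA_eq : (Measure.pi fun _ => stdLaplace) A
      = (stdLaplace.prod (Measure.pi fun _ => stdLaplace)) (e.symm ⁻¹' A) := by
    rw [← he.measure_preimage hA'.nullMeasurableSet, ← Set.preimage_comp, e.symm_comp_self,
      Set.preimage_id]
  rw [hupdate, hA_eq, he.measure_preimage
    (((measurable_fst.add_const s).prodMk measurable_snd) hA').nullMeasurableSet]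
  exact stdLaplace_prod_preimage_add_fst_le _ s hA'

def resamplingPValue {B : ℕ} (M : Fin (B + 1) → ℝ) : ℝ :=
  ((∑ i : Fin B, if M 0 ≤ M i.succ then (1 : ℝ) else 0) + 1) / ((B : ℝ) + 1)

lemma measurable_resamplingPValue {B : ℕ} : Measurable (resamplingPValue (B := B)) :=
  ((Finset.measurable_sum _ fun i _ =>
    Measurable.ite (measurableSet_le (measurable_pi_apply 0) (measurable_pi_apply i.succ))
      measurable_const measurable_const).add_const _).div_const _

lemma resamplingPValue_le_of_forall_sub_le {B : ℕ} {M M' : Fin (B + 1) → ℝ}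
    (h : ∀ i : Fin B, M' i.succ - M' 0 ≤ M i.succ - M 0) :
    resamplingPValue M' ≤ resamplingPValue M := by
  unfold resamplingPValue
  gcongr with i
  have := h i
  split_ifs <;> linarith

def noisyStatistic {ι X : Type*} (T : ι → X → ℝ) (c : ℝ) (x : X) (ζ : ι → ℝ) : ι → ℝ :=
  fun i => T i x + c * ζ i

lemma measurable_noisyStatistic {ι X : Type*} (T : ι → X → ℝ) (c : ℝ) (x : X) :
    Measurable (noisyStatistic T c x) := by
  unfold noisyStatistic
  fun_prop

lemma resamplingPValue_noisyStatistic_le {X : Type*} {B : ℕ} {T : Fin (B + 1) → X → ℝ}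
    {x x' : X} {Δ c : ℝ} {ζ ζ' : Fin (B + 1) → ℝ} (hT : ∀ i, |T i x - T i x'| ≤ Δ)
    (h0 : c * ζ 0 + 2 * Δ ≤ c * ζ' 0) (hsucc : ∀ i : Fin B, ζ' i.succ = ζ i.succ) :
    resamplingPValue (noisyStatistic T c x' ζ') ≤ resamplingPValue (noisyStatistic T c x ζ) := by
  refine resamplingPValue_le_of_forall_sub_le fun i => ?_
  have hT0 := abs_le.mp (hT 0)
  have hTi := abs_le.mp (hT i.succ)
  simp only [noisyStatistic, hsucc]
  linarith

lemma dpResamplingOutput_eq {XT : Type*} {n B : ℕ} (T : Fin (B + 1) → (Fin n → XT) → ℝ)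
    (α Δ ξ : ℝ) (x : Fin n → XT) (ζ : Fin (B + 1) → ℝ) :
    dpResamplingOutput T α Δ ξ x ζ
      = if resamplingPValue (noisyStatistic T (2 * Δ / ξ) x ζ) ≤ α then true else false :=
  rfl

lemma dpResamplingOutput_eq_true_iff {XT : Type*} {n B : ℕ}
    (T : Fin (B + 1) → (Fin n → XT) → ℝ) (α Δ ξ : ℝ) (x : Fin n → XT) (ζ : Fin (B + 1) → ℝ) :
    dpResamplingOutput T α Δ ξ x ζ = true ↔
      resamplingPValue (noisyStatistic T (2 * Δ / ξ) x ζ) ≤ α := by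
  simp [dpResamplingOutput_eq]

lemma measurable_dpResamplingOutput {XT : Type*} {n B : ℕ}
    (T : Fin (B + 1) → (Fin n → XT) → ℝ) (α Δ ξ : ℝ) (x : Fin n → XT) :
    Measurable (dpResamplingOutput T α Δ ξ x) := by
  simp only [funext (dpResamplingOutput_eq T α Δ ξ x)]
  exact Measurable.ite (measurableSet_le
    (measurable_resamplingPValue.comp (measurable_noisyStatistic _ _ x)) measurable_const)
    measurable_const measurable_const

lemma pi_stdLaplace_dpResamplingOutput_preimage_singleton_le {XT : Type*} {n B : ℕ}
    {T : Fin (B + 1) → (Fin n → XT) → ℝ} {α Δ ξ : ℝ} {x x' : Fin n → XT} (hξ : 0 < ξ)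
    (hT : ∀ i, |T i x - T i x'| ≤ Δ) (b : Bool) :
    (Measure.pi fun _ => stdLaplace) (dpResamplingOutput T α Δ ξ x ⁻¹' {b})
      ≤ ENNReal.ofReal (Real.exp ξ) *
        (Measure.pi fun _ => stdLaplace) (dpResamplingOutput T α Δ ξ x' ⁻¹' {b}) := by
  obtain ⟨s, hs, hcoupling⟩ : ∃ s : ℝ, |s| = ξ ∧ ∀ ζ, dpResamplingOutput T α Δ ξ x ζ = b →
      dpResamplingOutput T α Δ ξ x' (Function.update ζ 0 (ζ 0 + s)) = b := by
    have hcs : 2 * Δ / ξ * ξ = 2 * Δ := div_mul_cancel₀ _ hξ.ne'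
    have hsucc (ζ : Fin (B + 1) → ℝ) (t : ℝ) (i : Fin B) :
        Function.update ζ 0 (ζ 0 + t) i.succ = ζ i.succ :=
      Function.update_of_ne i.succ_ne_zero _ _
    cases b
    · refine ⟨-ξ, by rw [abs_neg, abs_of_pos hξ], fun ζ hζ => ?_⟩
      rw [← Bool.not_eq_true, dpResamplingOutput_eq_true_iff, not_le] at hζ ⊢
      have := resamplingPValue_noisyStatistic_le (c := 2 * Δ / ξ) (ζ' := ζ)
        (fun i => (abs_sub_comm _ _).trans_le (hT i))
        (by simp [mul_add, hcs]) fun i => (hsucc ζ (-ξ) i).symm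
      linarith
    · refine ⟨ξ, abs_of_pos hξ, fun ζ hζ => ?_⟩
      rw [dpResamplingOutput_eq_true_iff] at hζ ⊢
      have := resamplingPValue_noisyStatistic_le (c := 2 * Δ / ξ)
        (ζ' := Function.update ζ 0 (ζ 0 + ξ)) hT (by simp [mul_add, hcs]) (hsucc ζ ξ)
      linarith
  calc (Measure.pi fun _ => stdLaplace) (dpResamplingOutput T α Δ ξ x ⁻¹' {b})
      ≤ (Measure.pi fun _ => stdLaplace)
          {ζ | Function.update ζ 0 (ζ 0 + s) ∈ dpResamplingOutput T α Δ ξ x' ⁻¹' {b}} :=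
        measure_mono hcoupling
    _ ≤ ENNReal.ofReal (Real.exp |s|) *
          (Measure.pi fun _ => stdLaplace) (dpResamplingOutput T α Δ ξ x' ⁻¹' {b}) :=
        pi_stdLaplace_preimage_update_add_le 0 s
          (measurable_dpResamplingOutput T α Δ ξ x' (measurableSet_singleton b))
    _ = _ := by rw [hs]

lemma measure_preimage_le_mul_of_forall_singleton {α β : Type*} [MeasurableSpace α]
    [MeasurableSpace β] [MeasurableSingletonClass β] [Finite β] {μ ν : Measure α}
    {f g : α → β} (hf : Measurable f) (hg : Measurable g) {c : ℝ≥0∞}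
    (h : ∀ b, μ (f ⁻¹' {b}) ≤ c * ν (g ⁻¹' {b})) (S : Set β) :
    μ (f ⁻¹' S) ≤ c * ν (g ⁻¹' S) := by
  rw [← S.toFinite.coe_toFinset,
    ← sum_measure_preimage_singleton _ fun b _ => hf (measurableSet_singleton b),
    ← sum_measure_preimage_singleton _ fun b _ => hg (measurableSet_singleton b), Finset.mul_sum]
  exact Finset.sum_le_sum fun b _ => h b

lemma le_exp_mul_add_of_le_exp_add_log_mul {ε δ : ℝ} (hδ0 : 0 ≤ δ) (hδ1 : δ < 1)
    {P P' : ℝ≥0∞} (hP : P ≤ 1) (hP' : P' ≤ 1)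
    (h : P ≤ ENNReal.ofReal (Real.exp (ε + Real.log (1 / (1 - δ)))) * P') :
    P ≤ ENNReal.ofReal (Real.exp ε) * P' + ENNReal.ofReal δ := by
  have hδ : 0 < 1 - δ := by linarith
  lift P to NNReal using ne_top_of_le_ne_top one_ne_top hP
  lift P' to NNReal using ne_top_of_le_ne_top one_ne_top hP'
  rw [← ofReal_coe_nnreal, ← ofReal_coe_nnreal, ← ENNReal.ofReal_mul (by positivity),
    ENNReal.ofReal_le_ofReal_iff (by positivity)] at h
  rw [← ofReal_coe_nnreal, ← ofReal_coe_nnreal, ← ENNReal.ofReal_mul (by positivity),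
    ← ENNReal.ofReal_add (by positivity) hδ0, ENNReal.ofReal_le_ofReal_iff (by positivity)]
  have hP1 : (P : ℝ) ≤ 1 := by exact_mod_cast hP
  rw [Real.exp_add, Real.exp_log (by positivity), mul_one_div, div_mul_eq_mul_div,
    le_div_iff₀ hδ] at h
  -- `P ≤ P (1 - δ) + δ` since `P ≤ 1`
  nlinarith [mul_le_mul_of_nonneg_right hP1 hδ0]

theorem dp_resampling_test_is_DP_general
    {XT : Type*} (n B : ℕ)
    (α ε δ Δ : ℝ) (hε : 0 < ε)
    (hδ0 : 0 ≤ δ) (hδ1 : δ < 1)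
    (T : Fin (B + 1) → (Fin n → XT) → ℝ)
    (hsens : ∀ i (x x' : Fin n → XT),
      Set.ncard {j | x j ≠ x' j} ≤ 1 → |T i x - T i x'| ≤ Δ)
    (x x' : Fin n → XT) (hham : Set.ncard {j | x j ≠ x' j} ≤ 1)
    (S : Set Bool) :
    (Measure.pi fun _ : Fin (B + 1) => stdLaplace)
        {ζ | dpResamplingOutput T α Δ (ε + Real.log (1 / (1 - δ))) x ζ ∈ S}
      ≤ ENNReal.ofReal (Real.exp ε) *
          (Measure.pi fun _ : Fin (B + 1) => stdLaplace)
            {ζ | dpResamplingOutput T α Δ (ε + Real.log (1 / (1 - δ))) x' ζ ∈ S}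
        + ENNReal.ofReal δ := by
  have hξ : 0 < ε + Real.log (1 / (1 - δ)) := by
    have : 0 ≤ Real.log (1 / (1 - δ)) :=
      Real.log_nonneg ((le_div_iff₀ (by linarith)).mpr (by linarith))
    linarith
  refine le_exp_mul_add_of_le_exp_add_log_mul hδ0 hδ1 prob_le_one prob_le_one ?_
  exact measure_preimage_le_mul_of_forall_singleton (measurable_dpResamplingOutput T α Δ _ x)
    (measurable_dpResamplingOutput T α Δ _ x')
    (pi_stdLaplace_dpResamplingOutput_preimage_singleton_le hξ fun i => hsens i x x' hham) S

/-- the differentially private resampling test is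
`(ε,δ)`-differentially private. -/
theorem dp_resampling_test_is_DP
    {XT : Type*} (n B : ℕ) (hn : 1 ≤ n) (hB : 1 ≤ B)
    (α ε δ Δ : ℝ) (hα0 : 0 < α) (hα1 : α < 1) (hε : 0 < ε)
    (hδ0 : 0 ≤ δ) (hδ1 : δ < 1) (hΔ : 0 < Δ)
    (T : Fin (B + 1) → (Fin n → XT) → ℝ)
    (hsens : ∀ i (x x' : Fin n → XT),
      Set.ncard {j | x j ≠ x' j} ≤ 1 → |T i x - T i x'| ≤ Δ)
    (x x' : Fin n → XT) (hham : Set.ncard {j | x j ≠ x' j} ≤ 1)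
    (S : Set Bool) :
    (Measure.pi fun _ : Fin (B + 1) => stdLaplace)
        {ζ | dpResamplingOutput T α Δ (ε + Real.log (1 / (1 - δ))) x ζ ∈ S}
      ≤ ENNReal.ofReal (Real.exp ε) *
          (Measure.pi fun _ : Fin (B + 1) => stdLaplace)
            {ζ | dpResamplingOutput T α Δ (ε + Real.log (1 / (1 - δ))) x' ζ ∈ S}
        + ENNReal.ofReal δ :=
  dp_resampling_test_is_DP_general n B α ε δ Δ hε hδ0 hδ1 T hsens x x' hham S

end
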